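/- (Eckart–Young, as used.) Let K be an n × n real symmetric positive definite matrix with spectral decomposition K = U D Uᵀ, where U is orthogonal and D is diagonal with entries d(1,1) ≥ d(2,2) ≥ … ≥ d(n,n) > 0 in descending order. For 1 ≤ m < n let K_m = U_m D_m U_mᵀ, where U_m consists of the first m columns of U and D_m is the top-left m × m block of D. Then for every n × n real matrix B of rank at most m, ‖K − K_m‖₂ ≤ ‖K − B‖₂ and ‖K − K_m‖_F ≤ ‖K − B‖_F; moreover ‖K − K_m‖₂ = d(m+1, m+1) and ‖K − K_m‖_F² = Σ_{j=m+1}^n d(j,j)². -/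

import Mathlib

open Matrix

noncomputable section

/-- Euclidean norm of a vector. -/
def vecNorm {n : ℕ} (v : Fin n → ℝ) : ℝ := Real.sqrt (∑ i, v i ^ 2)

/-- The spectral (operator) norm `‖A‖₂ = max { ‖Av‖ : ‖v‖ = 1 }`. -/
def specNorm {n m : ℕ} (A : Matrix (Fin n) (Fin m) ℝ) : ℝ :=
  sSup { t | ∃ v : Fin m → ℝ, vecNorm v = 1 ∧ t = vecNorm (A.mulVec v) }

/-- The Frobenius norm `‖A‖_F = √(∑ᵢⱼ A i j ²)`. -/
def frobNorm {n m : ℕ} (A : Matrix (Fin n) (Fin m) ℝ) : ℝ :=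
  Real.sqrt (∑ i, ∑ j, A i j ^ 2)

/-!
Conjugation by the orthogonal matrix `U` preserves both norms, so it suffices to compare
`diagonal d` with `diagonal d - B` for a matrix `B` of rank at most `m`. The kernel of `B` has
dimension at least `n - m`. It therefore meets the span of the first `m + 1` coordinate vectors,
on which `diagonal d` stretches every vector by at least `d m`; this bounds the spectral norm.
For the Frobenius norm, take an orthonormal basis `w` of the kernel. By Bessel's inequality on
the rows, `‖diagonal d - B‖_F² ≥ ∑ⱼ ‖diagonal d (w j)‖² = ∑ᵢ dᵢ² cᵢ`, where the weights `cᵢ` lie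
in `[0, 1]` and sum to at least `n - m`. Since `d` is decreasing, such a weighted sum is at least
the sum of the last `n - m` of the `dᵢ²`.
-/

open scoped Matrix.Norms.L2Operator

lemma vecNorm_eq_norm {n : ℕ} (v : Fin n → ℝ) : vecNorm v = ‖WithLp.toLp 2 v‖ := by
  rw [EuclideanSpace.norm_eq, vecNorm]
  simp

lemma specNorm_eq_l2_opNorm {n m : ℕ} (A : Matrix (Fin n) (Fin m) ℝ) : specNorm A = ‖A‖ := by
  rw [l2_opNorm_def, ← ContinuousLinearMap.sSup_sphere_eq_norm, specNorm]
  congr 1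
  ext t
  constructor
  · rintro ⟨v, hv, rfl⟩
    exact ⟨WithLp.toLp 2 v, by simpa [vecNorm_eq_norm] using hv, by simp [vecNorm_eq_norm]⟩
  · rintro ⟨x, hx, rfl⟩
    exact ⟨x.ofLp, by simpa [vecNorm_eq_norm] using hx, by rw [vecNorm_eq_norm]; rfl⟩

lemma l2_opNorm_conj_orthogonal {n : ℕ} {U : Matrix (Fin n) (Fin n) ℝ} (hU : Uᵀ * U = 1)
    (A : Matrix (Fin n) (Fin n) ℝ) : ‖U * A * Uᵀ‖ = ‖A‖ := by
  have hU' : U ∈ unitary (Matrix (Fin n) (Fin n) ℝ) := (Matrix.mem_orthogonalGroup_iff' _ _).2 hU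
  have hUt : Uᵀ = star U := by simp [Matrix.star_eq_conjTranspose]
  rw [hUt, CStarRing.norm_mul_mem_unitary _ (Unitary.star_mem hU'),
    CStarRing.norm_mem_unitary_mul _ hU']

lemma sum_castLE_eq_sum_ite {M : Type*} [AddCommMonoid M] {m n : ℕ} (h : m ≤ n) (f : Fin n → M) :
    ∑ j : Fin m, f (Fin.castLE h j) = ∑ i : Fin n, if (i : ℕ) < m then f i else 0 := by
  rw [← Finset.sum_filter]
  refine (Finset.sum_map Finset.univ (Fin.castLEEmb h) f).symm.trans ?_
  congr 1
  ext i
  simp only [Finset.mem_map, Finset.mem_univ, Fin.castLEEmb_apply, true_and, Finset.mem_filter]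
  exact ⟨fun ⟨j, hj⟩ => hj ▸ j.isLt, fun hi => ⟨⟨i, hi⟩, rfl⟩⟩

lemma conj_diagonal_sub_conj_diagonal_castLE {m n : ℕ} (h : m ≤ n)
    (U : Matrix (Fin n) (Fin n) ℝ) (d : Fin n → ℝ) :
    U * diagonal d * Uᵀ - U.submatrix id (Fin.castLE h) * diagonal (fun j => d (Fin.castLE h j)) *
        (U.submatrix id (Fin.castLE h))ᵀ =
      U * diagonal (fun i : Fin n => if m ≤ (i : ℕ) then d i else 0) * Uᵀ := by
  ext i k
  rw [Matrix.sub_apply, mul_apply, mul_apply, mul_apply]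
  simp only [mul_diagonal, transpose_apply, submatrix_apply, id_eq]
  rw [sum_castLE_eq_sum_ite h (fun j => U i j * d j * U k j), ← Finset.sum_sub_distrib]
  refine Finset.sum_congr rfl fun j _ => ?_
  split_ifs <;> first | omega | ring

lemma conj_sub_eq_conj_sub_conj {n : ℕ} {U : Matrix (Fin n) (Fin n) ℝ} (hU : Uᵀ * U = 1)
    (A B : Matrix (Fin n) (Fin n) ℝ) : U * A * Uᵀ - B = U * (A - Uᵀ * B * U) * Uᵀ := by
  have hUUt : U * Uᵀ = 1 := mul_eq_one_comm.1 hU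
  rw [Matrix.mul_sub, Matrix.sub_mul]
  congr 1
  simp only [← Matrix.mul_assoc, hUUt, Matrix.one_mul]
  rw [Matrix.mul_assoc, hUUt, Matrix.mul_one]

lemma frobNorm_nonneg {n m : ℕ} (A : Matrix (Fin n) (Fin m) ℝ) : 0 ≤ frobNorm A :=
  Real.sqrt_nonneg _

lemma frobNorm_sq {n m : ℕ} (A : Matrix (Fin n) (Fin m) ℝ) :
    frobNorm A ^ 2 = ∑ i, ∑ j, A i j ^ 2 :=
  Real.sq_sqrt (by positivity)

lemma frobNorm_sq_eq_trace {n m : ℕ} (A : Matrix (Fin n) (Fin m) ℝ) :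
    frobNorm A ^ 2 = (Aᵀ * A).trace := by
  rw [frobNorm_sq]
  simp only [trace, diag, mul_apply, transpose_apply, sq]
  rw [Finset.sum_comm]

lemma frobNorm_conj_orthogonal {n : ℕ} {U : Matrix (Fin n) (Fin n) ℝ} (hU : Uᵀ * U = 1)
    (A : Matrix (Fin n) (Fin n) ℝ) : frobNorm (U * A * Uᵀ) = frobNorm A := by
  have hsq : frobNorm (U * A * Uᵀ) ^ 2 = frobNorm A ^ 2 := by
    rw [frobNorm_sq_eq_trace, frobNorm_sq_eq_trace]
    calc ((U * A * Uᵀ)ᵀ * (U * A * Uᵀ)).trace = (U * (Aᵀ * A) * Uᵀ).trace := by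
          simp only [transpose_mul, transpose_transpose, Matrix.mul_assoc]
          rw [← Matrix.mul_assoc Uᵀ U, hU, Matrix.one_mul]
      _ = (Aᵀ * A).trace := by
          rw [trace_mul_comm, ← Matrix.mul_assoc, hU, Matrix.one_mul]
  exact (sq_eq_sq₀ (frobNorm_nonneg _) (frobNorm_nonneg _)).1 hsq

lemma frobNorm_diagonal_sq {n : ℕ} (d : Fin n → ℝ) :
    frobNorm (diagonal d) ^ 2 = ∑ i, d i ^ 2 := by
  rw [frobNorm_sq]
  refine Finset.sum_congr rfl fun i _ => ?_
  rw [Finset.sum_eq_single i (fun j _ hj => by simp [diagonal_apply_ne' d hj]) (by simp)]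
  simp

lemma sum_ite_le_sum_mul {n m : ℕ} (hmn : m < n) {a c : Fin n → ℝ} (ha : Antitone a)
    (ha0 : ∀ i, 0 ≤ a i) (hc0 : ∀ i, 0 ≤ c i) (hc1 : ∀ i, c i ≤ 1)
    (hc : ((n - m : ℕ) : ℝ) ≤ ∑ i, c i) :
    ∑ i : Fin n, (if m ≤ (i : ℕ) then a i else 0) ≤ ∑ i, a i * c i := by
  set t : Fin n := ⟨m, hmn⟩
  set x : Fin n → ℝ := fun i => c i - if m ≤ (i : ℕ) then 1 else 0
  have hcard : ∑ i : Fin n, (if m ≤ (i : ℕ) then (1 : ℝ) else 0) = ((n - m : ℕ) : ℝ) := by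
    rw [Finset.sum_boole, ← Fin.card_Ici t]
    congr 2
    ext i
    simp [t, Fin.le_def]
  have hx : 0 ≤ ∑ i, x i := by
    simp only [x, Finset.sum_sub_distrib, hcard]
    linarith
  -- `a - a t` and `x` have the same sign on both sides of the threshold `t`
  have hterm : ∀ i, 0 ≤ (a i - a t) * x i := by
    intro i
    by_cases hi : m ≤ (i : ℕ)
    · refine mul_nonneg_of_nonpos_of_nonpos (sub_nonpos.2 (ha (Fin.le_def.2 hi))) ?_
      simp [x, hi, hc1 i]
    · refine mul_nonneg (sub_nonneg.2 (ha (Fin.le_def.2 (not_le.1 hi).le))) ?_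
      simp [x, hi, hc0 i]
  have hsplit : ∑ i, a i * c i - ∑ i : Fin n, (if m ≤ (i : ℕ) then a i else 0)
      = ∑ i, (a i - a t) * x i + a t * ∑ i, x i := by
    rw [Finset.mul_sum, ← Finset.sum_sub_distrib, ← Finset.sum_add_distrib]
    refine Finset.sum_congr rfl fun i _ => ?_
    simp only [x]
    split_ifs <;> ring
  linarith [Finset.sum_nonneg (s := Finset.univ) fun i _ => hterm i, mul_nonneg (ha0 t) hx]

lemma sum_norm_toEuclideanLin_sq_le_frobNorm_sq {ι : Type*} [Fintype ι] {n k : ℕ}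
    (A : Matrix (Fin n) (Fin k) ℝ) {w : ι → EuclideanSpace ℝ (Fin k)} (hw : Orthonormal ℝ w) :
    ∑ j, ‖toEuclideanLin A (w j)‖ ^ 2 ≤ frobNorm A ^ 2 := by
  have hrow : ∀ i j, (toEuclideanLin A (w j)) i = inner ℝ (w j) (WithLp.toLp 2 (A i)) := by
    intro i j
    simp [EuclideanSpace.inner_eq_star_dotProduct, mulVec, toLpLin_apply]
  calc ∑ j, ‖toEuclideanLin A (w j)‖ ^ 2
        = ∑ i, ∑ j, ‖inner ℝ (w j) (WithLp.toLp 2 (A i))‖ ^ 2 := by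
          simp only [EuclideanSpace.real_norm_sq_eq, hrow, Real.norm_eq_abs, sq_abs]
          exact Finset.sum_comm
    _ ≤ ∑ i, ‖WithLp.toLp 2 (A i)‖ ^ 2 :=
          Finset.sum_le_sum fun i _ => hw.sum_inner_products_le _
    _ = frobNorm A ^ 2 := by simp [frobNorm_sq, EuclideanSpace.real_norm_sq_eq]

lemma sub_le_finrank_ker_toEuclideanLin {k n m : ℕ} {B : Matrix (Fin k) (Fin n) ℝ}
    (hB : B.rank ≤ m) : n - m ≤ Module.finrank ℝ (LinearMap.ker (toEuclideanLin B)) := by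
  have hrank : Module.finrank ℝ (LinearMap.range (toEuclideanLin B)) = B.rank := by
    rw [rank_eq_finrank_range_toLin B (PiLp.basisFun 2 ℝ (Fin k)) (PiLp.basisFun 2 ℝ (Fin n))]
    rfl
  have := LinearMap.finrank_range_add_finrank_ker (toEuclideanLin B)
  rw [finrank_euclideanSpace_fin] at this
  omega

lemma exists_ne_zero_mem_ker_of_rank_le {n m : ℕ} (hmn : m < n) {B : Matrix (Fin n) (Fin n) ℝ}
    (hB : B.rank ≤ m) :
    ∃ v : EuclideanSpace ℝ (Fin n), v ≠ 0 ∧ toEuclideanLin B v = 0 ∧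
      ∀ i : Fin n, m < (i : ℕ) → v i = 0 := by
  set t : Fin n := ⟨m, hmn⟩
  set W := LinearMap.ker (toEuclideanLin B)
  -- reading off the coordinates beyond `t` is a map from `W` to a space of smaller dimension
  let tailCoords : W →ₗ[ℝ] ({i : Fin n // t < i} → ℝ) :=
    LinearMap.funLeft ℝ ℝ Subtype.val ∘ₗ (WithLp.linearEquiv 2 ℝ (Fin n → ℝ)).toLinearMap ∘ₗ
      W.subtype
  have hdim : Module.finrank ℝ ({i : Fin n // t < i} → ℝ) < Module.finrank ℝ W := by
    rw [Module.finrank_fintype_fun_eq_card, Fintype.card_subtype, Finset.filter_lt_eq_Ioi,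
      Fin.card_Ioi]
    have : n - m ≤ Module.finrank ℝ W := sub_le_finrank_ker_toEuclideanLin hB
    simp only [t]
    omega
  obtain ⟨v, hv, hv0⟩ := Submodule.exists_mem_ne_zero_of_ne_bot
    (LinearMap.ker_ne_bot_of_finrank_lt (f := tailCoords) hdim)
  refine ⟨v, fun h => hv0 (Subtype.ext h), v.2, fun i hi => ?_⟩
  exact congrFun (LinearMap.mem_ker.1 hv) ⟨i, Fin.lt_def.2 hi⟩

lemma le_l2_opNorm_diagonal_sub {n m : ℕ} (hmn : m < n) {d : Fin n → ℝ} (hd : Antitone d)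
    (hd0 : ∀ i, 0 ≤ d i) {B : Matrix (Fin n) (Fin n) ℝ} (hB : B.rank ≤ m) :
    d ⟨m, hmn⟩ ≤ ‖diagonal d - B‖ := by
  obtain ⟨v, hv0, hBv, hv⟩ := exists_ne_zero_mem_ker_of_rank_le hmn hB
  have hDv : d ⟨m, hmn⟩ * ‖v‖ ≤ ‖toEuclideanLin (diagonal d - B) v‖ := by
    rw [map_sub, LinearMap.sub_apply, hBv, sub_zero]
    refine (sq_le_sq₀ (mul_nonneg (hd0 _) (norm_nonneg v)) (norm_nonneg _)).1 ?_
    simp only [mul_pow, EuclideanSpace.real_norm_sq_eq, Finset.mul_sum, toLpLin_apply,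
      mulVec_diagonal]
    refine Finset.sum_le_sum fun i _ => ?_
    by_cases hi : m < (i : ℕ)
    · simp [hv i hi]
    · exact mul_le_mul_of_nonneg_right
        (pow_le_pow_left₀ (hd0 _) (hd (Fin.le_def.2 (not_lt.1 hi))) 2) (sq_nonneg _)
  have hop : ‖toEuclideanLin (diagonal d - B) v‖ ≤ ‖diagonal d - B‖ * ‖v‖ :=
    (toEuclideanCLM (𝕜 := ℝ) (diagonal d - B)).le_opNorm v
  exact le_of_mul_le_mul_right (hDv.trans hop) (norm_pos_iff.2 hv0)

lemma sum_ite_sq_le_frobNorm_diagonal_sub_sq {n m : ℕ} (hmn : m < n) {d : Fin n → ℝ}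
    (hd : Antitone d) (hd0 : ∀ i, 0 ≤ d i) {B : Matrix (Fin n) (Fin n) ℝ} (hB : B.rank ≤ m) :
    ∑ i : Fin n, (if m ≤ (i : ℕ) then d i ^ 2 else 0) ≤ frobNorm (diagonal d - B) ^ 2 := by
  set W := LinearMap.ker (toEuclideanLin B)
  set b := stdOrthonormalBasis ℝ W
  set w : Fin (Module.finrank ℝ W) → EuclideanSpace ℝ (Fin n) := fun j => b j
  have hw : Orthonormal ℝ w := b.orthonormal.comp_linearIsometry W.subtypeₗᵢ
  have hBw : ∀ j, toEuclideanLin B (w j) = 0 := fun j => (b j).2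
  -- `c i` is the squared length of the projection of the `i`-th basis vector onto `ker B`
  set c : Fin n → ℝ := fun i => ∑ j, w j i ^ 2
  have hc0 : ∀ i, 0 ≤ c i := fun i => Finset.sum_nonneg fun j _ => sq_nonneg _
  have hc1 : ∀ i, c i ≤ 1 := by
    intro i
    simpa [c, EuclideanSpace.inner_single_right] using
      hw.sum_inner_products_le (EuclideanSpace.single i (1 : ℝ)) (s := Finset.univ)
  have hcsum : ∑ i, c i = Module.finrank ℝ W := by
    simp only [c]
    rw [Finset.sum_comm]
    simp [← EuclideanSpace.real_norm_sq_eq, hw.1]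
  have hW : ((n - m : ℕ) : ℝ) ≤ ∑ i, c i := by
    rw [hcsum]
    exact_mod_cast sub_le_finrank_ker_toEuclideanLin hB
  calc ∑ i : Fin n, (if m ≤ (i : ℕ) then d i ^ 2 else 0)
      ≤ ∑ i, d i ^ 2 * c i :=
        sum_ite_le_sum_mul hmn (fun i j hij => pow_le_pow_left₀ (hd0 j) (hd hij) 2)
          (fun i => sq_nonneg _) hc0 hc1 hW
    _ = ∑ j, ‖toEuclideanLin (diagonal d - B) (w j)‖ ^ 2 := by
        simp only [map_sub, LinearMap.sub_apply, hBw, sub_zero, EuclideanSpace.real_norm_sq_eq,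
          toLpLin_apply, mulVec_diagonal, mul_pow, c, Finset.mul_sum]
        exact Finset.sum_comm
    _ ≤ frobNorm (diagonal d - B) ^ 2 := sum_norm_toEuclideanLin_sq_le_frobNorm_sq _ hw

lemma norm_ite_eq_of_antitone {n m : ℕ} (hmn : m < n) {d : Fin n → ℝ} (hd : Antitone d)
    (hd0 : ∀ i, 0 ≤ d i) : ‖fun i : Fin n => if m ≤ (i : ℕ) then d i else 0‖ = d ⟨m, hmn⟩ := by
  refine le_antisymm ((pi_norm_le_iff_of_nonneg (hd0 _)).2 fun i => ?_) ?_
  · split_ifs with hi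
    · rw [Real.norm_of_nonneg (hd0 i)]
      exact hd (Fin.le_def.2 hi)
    · simpa using hd0 _
  · simpa [Real.norm_of_nonneg (hd0 _)] using
      norm_le_pi_norm (fun i : Fin n => if m ≤ (i : ℕ) then d i else 0) ⟨m, hmn⟩

theorem stmt15_general (n m : ℕ) (hmn : m < n)
    (K U : Matrix (Fin n) (Fin n) ℝ) (dvec : Fin n → ℝ)
    (hU₁ : Uᵀ * U = 1)
    (hd : Antitone dvec) (hdpos : ∀ i, 0 < dvec i)
    (hK : K = U * Matrix.diagonal dvec * Uᵀ)
    (Um : Matrix (Fin n) (Fin m) ℝ) (hUm : Um = U.submatrix id (Fin.castLE hmn.le))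
    (Dm : Matrix (Fin m) (Fin m) ℝ)
    (hDm : Dm = Matrix.diagonal fun i : Fin m => dvec (Fin.castLE hmn.le i))
    (Km : Matrix (Fin n) (Fin n) ℝ) (hKm : Km = Um * Dm * Umᵀ) :
    (∀ B : Matrix (Fin n) (Fin n) ℝ, B.rank ≤ m →
        specNorm (K - Km) ≤ specNorm (K - B) ∧ frobNorm (K - Km) ≤ frobNorm (K - B)) ∧
      specNorm (K - Km) = dvec ⟨m, hmn⟩ ∧
      frobNorm (K - Km) ^ 2 = ∑ j : Fin n, (if m ≤ (j : ℕ) then dvec j ^ 2 else 0) := by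
  have hd0 : ∀ i, 0 ≤ dvec i := fun i => (hdpos i).le
  have hKKm : K - Km = U * diagonal (fun i : Fin n => if m ≤ (i : ℕ) then dvec i else 0) * Uᵀ := by
    rw [hK, hKm, hUm, hDm, conj_diagonal_sub_conj_diagonal_castLE]
  have hKB : ∀ B, K - B = U * (diagonal dvec - Uᵀ * B * U) * Uᵀ := fun B => by
    rw [hK, conj_sub_eq_conj_sub_conj hU₁]
  have hrank : ∀ B : Matrix (Fin n) (Fin n) ℝ, (Uᵀ * B * U).rank ≤ B.rank := fun B =>
    (rank_mul_le_left _ _).trans (rank_mul_le_right _ _)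
  have hspec : specNorm (K - Km) = dvec ⟨m, hmn⟩ := by
    rw [specNorm_eq_l2_opNorm, hKKm, l2_opNorm_conj_orthogonal hU₁, l2_opNorm_diagonal,
      norm_ite_eq_of_antitone hmn hd hd0]
  have hfrob : frobNorm (K - Km) ^ 2 = ∑ j : Fin n, (if m ≤ (j : ℕ) then dvec j ^ 2 else 0) := by
    rw [hKKm, frobNorm_conj_orthogonal hU₁, frobNorm_diagonal_sq]
    exact Finset.sum_congr rfl fun i _ => by split_ifs <;> simp
  refine ⟨fun B hB => ⟨?_, ?_⟩, hspec, hfrob⟩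
  · rw [hspec, specNorm_eq_l2_opNorm, hKB, l2_opNorm_conj_orthogonal hU₁]
    exact le_l2_opNorm_diagonal_sub hmn hd hd0 ((hrank B).trans hB)
  · rw [← sq_le_sq₀ (frobNorm_nonneg _) (frobNorm_nonneg _), hfrob, hKB,
      frobNorm_conj_orthogonal hU₁]
    exact sum_ite_sq_le_frobNorm_diagonal_sub_sq hmn hd hd0 ((hrank B).trans hB)

/-- Eckart–Young, as used: let `K = U D Uᵀ` be a spectral decomposition of
a symmetric positive definite `n × n` matrix, with `U` orthogonal and the diagonal entries
`dvec` of `D` positive and in descending order.  For `1 ≤ m < n` let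
`Km = U_m D_m U_mᵀ`, where `U_m` consists of the first `m` columns of `U` and `D_m` is the
top-left `m × m` block of `D`.  Then for every `n × n` matrix `B` of rank at most `m`,
`‖K − Km‖₂ ≤ ‖K − B‖₂` and `‖K − Km‖_F ≤ ‖K − B‖_F`; moreover
`‖K − Km‖₂ = d(m+1, m+1)` (0-indexed: `dvec ⟨m, _⟩`) and
`‖K − Km‖_F² = ∑_{j=m+1}^n d(j,j)²` (0-indexed: the sum of `dvec j ^ 2` over `j ≥ m`). -/
theorem stmt15 (n m : ℕ) (hm1 : 1 ≤ m) (hmn : m < n)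
    (K U : Matrix (Fin n) (Fin n) ℝ) (dvec : Fin n → ℝ)
    (hU₁ : Uᵀ * U = 1) (hU₂ : U * Uᵀ = 1)
    (hd : Antitone dvec) (hdpos : ∀ i, 0 < dvec i)
    (hK : K = U * Matrix.diagonal dvec * Uᵀ)
    (Um : Matrix (Fin n) (Fin m) ℝ) (hUm : Um = U.submatrix id (Fin.castLE hmn.le))
    (Dm : Matrix (Fin m) (Fin m) ℝ)
    (hDm : Dm = Matrix.diagonal fun i : Fin m => dvec (Fin.castLE hmn.le i))
    (Km : Matrix (Fin n) (Fin n) ℝ) (hKm : Km = Um * Dm * Umᵀ) :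
    (∀ B : Matrix (Fin n) (Fin n) ℝ, B.rank ≤ m →
        specNorm (K - Km) ≤ specNorm (K - B) ∧ frobNorm (K - Km) ≤ frobNorm (K - B)) ∧
      specNorm (K - Km) = dvec ⟨m, hmn⟩ ∧
      frobNorm (K - Km) ^ 2 = ∑ j : Fin n, (if m ≤ (j : ℕ) then dvec j ^ 2 else 0) :=
  stmt15_general n m hmn K U dvec hU₁ hd hdpos hK Um hUm Dm hDm Km hKm

end
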